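/- Let k be a field, M = k·a ⊕ k·b the 2-dimensional abelian Lie algebra, and S = ⟨a,b,z,t | [z,b] − [t,a], [a,b]⟩ (a one-relator-style graded presentation with a,b in degree 1 and z,t in degree 2). Then there is no Lie algebra Q with S ≅ M * Q (free product of Lie algebras) under an isomorphism restricting to the identity on M. -/

import Mathlib

universe u

open FreeLieAlgebra

variable (k : Type u) [Field k]

section FreeProd

variable (M Q : Type u) [LieRing M] [LieAlgebra k M] [LieRing Q] [LieAlgebra k Q]

noncomputable def fpG₁ (x : M) : FreeLieAlgebra k (M ⊕ Q) := of k (Sum.inl x)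

noncomputable def fpG₂ (x : Q) : FreeLieAlgebra k (M ⊕ Q) := of k (Sum.inr x)

/-- Relators presenting the free product `M * Q` of Lie algebras: the linear and bracket
relations of each factor. -/
noncomputable def fpRel : Set (FreeLieAlgebra k (M ⊕ Q)) :=
  {y | ∃ (c : k) (x₁ x₂ : M),
      y = fpG₁ k M Q (c • x₁ + x₂) - c • fpG₁ k M Q x₁ - fpG₁ k M Q x₂} ∪
  {y | ∃ x₁ x₂ : M, y = fpG₁ k M Q ⁅x₁, x₂⁆ - ⁅fpG₁ k M Q x₁, fpG₁ k M Q x₂⁆} ∪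
  {y | ∃ (c : k) (x₁ x₂ : Q),
      y = fpG₂ k M Q (c • x₁ + x₂) - c • fpG₂ k M Q x₁ - fpG₂ k M Q x₂} ∪
  {y | ∃ x₁ x₂ : Q, y = fpG₂ k M Q ⁅x₁, x₂⁆ - ⁅fpG₂ k M Q x₁, fpG₂ k M Q x₂⁆}

/-- The free product `M * Q` of Lie algebras over `k`. -/
noncomputable def FreeProd : Type u :=
  FreeLieAlgebra k (M ⊕ Q) ⧸
    LieSubmodule.lieSpan k (FreeLieAlgebra k (M ⊕ Q)) (fpRel k M Q)

noncomputable instance : LieRing (FreeProd k M Q) := by unfold FreeProd; infer_instance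
noncomputable instance : LieAlgebra k (FreeProd k M Q) := by unfold FreeProd; infer_instance

/-- The canonical map `M → M * Q`. -/
noncomputable def fpOf₁ (x : M) : FreeProd k M Q :=
  LieSubmodule.Quotient.mk' _ (fpG₁ k M Q x)

end FreeProd

/-- The 2-dimensional abelian Lie algebra `M = ka ⊕ kb = ⟨a, b | [a,b]⟩`. -/
noncomputable def MAb : Type u :=
  FreeLieAlgebra k (Fin 2) ⧸ LieSubmodule.lieSpan k (FreeLieAlgebra k (Fin 2))
    ({⁅of k (0 : Fin 2), of k (1 : Fin 2)⁆} : Set (FreeLieAlgebra k (Fin 2)))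

noncomputable instance : LieRing (MAb k) := by unfold MAb; infer_instance
noncomputable instance : LieAlgebra k (MAb k) := by unfold MAb; infer_instance

/-- The images `a, b` of the generators in `M`. -/
noncomputable def mgen (i : Fin 2) : MAb k :=
  LieSubmodule.Quotient.mk' _ (of k i)

/-- `S = ⟨a,b,z,t | [z,b] − [t,a], [a,b]⟩`, graded with `a,b` in degree 1 and `z,t` in
degree 2 (generators `a = x₀, b = x₁, z = x₂, t = x₃`). -/
noncomputable def SAlg : Type u :=
  FreeLieAlgebra k (Fin 4) ⧸ LieSubmodule.lieSpan k (FreeLieAlgebra k (Fin 4))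
    ({⁅of k (2 : Fin 4), of k (1 : Fin 4)⁆ - ⁅of k (3 : Fin 4), of k (0 : Fin 4)⁆,
      ⁅of k (0 : Fin 4), of k (1 : Fin 4)⁆} : Set (FreeLieAlgebra k (Fin 4)))

noncomputable instance : LieRing (SAlg k) := by unfold SAlg; infer_instance
noncomputable instance : LieAlgebra k (SAlg k) := by unfold SAlg; infer_instance

/-- The images of the generators `a = x₀, b = x₁, z = x₂, t = x₃` in `S`. -/
noncomputable def sgen (i : Fin 4) : SAlg k :=
  LieSubmodule.Quotient.mk' _ (of k i)

/-!
Pull the coefficient of `z` back along the isomorphism to a character `ψ` of `M * Q`; it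
vanishes on `M`. Map `M * Q` to the non-abelian two-dimensional Lie algebra `k ⋊ k` by sending
`M` into the ideal `k ⋊ 0` through the coefficient of `b`, and `Q` into the complement `0 ⋊ k`
through `ψ`. The projection onto the complement then recovers `ψ` on all of `M * Q`, so `z` is
sent to an element acting on the image of `b` by `ψ z = 1`. But `a` is sent to `0`, and the
relation `⁅z, b⁆ = ⁅t, a⁆` forces that action to be trivial.
-/

attribute [local instance] LieRing.ofAssociativeRing

open LieAlgebra

lemma lie_eq_zero_of_commRing {R : Type*} [CommRing R] (a b : R) : ⁅a, b⁆ = 0 :=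
  (Commute.all a b).lie_eq

section Presentation

variable {R : Type*} [CommRing R] {L L' : Type*} [LieRing L] [LieAlgebra R L] [LieRing L']
  [LieAlgebra R L']

namespace LieHom

def ofSMulAddLie (φ : L → L') (hlin : ∀ (c : R) x y, φ (c • x + y) = c • φ x + φ y)
    (hlie : ∀ x y, φ ⁅x, y⁆ = ⁅φ x, φ y⁆) : L →ₗ⁅R⁆ L' :=
  have hzero : φ 0 = 0 := by simpa using hlin 1 0 0
  { toFun := φ
    map_add' x y := by simpa using hlin 1 x y
    map_smul' c x := by simpa [hzero] using hlin c x 0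
    map_lie' := hlie _ _ }

end LieHom

namespace LieIdeal

variable (I : LieIdeal R L)

def mkHom : L →ₗ⁅R⁆ L ⧸ I where
  __ := I.toSubmodule.mkQ
  map_lie' := rfl

def quotLift (f : L →ₗ⁅R⁆ L') (h : I ≤ f.ker) : L ⧸ I →ₗ⁅R⁆ L' where
  __ := I.toSubmodule.liftQ f.toLinearMap h
  map_lie' {x y} := by
    obtain ⟨x, rfl⟩ := LieSubmodule.Quotient.surjective_mk' I x
    obtain ⟨y, rfl⟩ := LieSubmodule.Quotient.surjective_mk' I y
    exact f.map_lie x y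

lemma quotient_hom_ext {g h : L ⧸ I →ₗ⁅R⁆ L'} (H : g.comp I.mkHom = h.comp I.mkHom) :
    g = h := by
  ext x
  obtain ⟨x, rfl⟩ := LieSubmodule.Quotient.surjective_mk' I x
  exact LieHom.congr_fun H x

end LieIdeal

abbrev PresentedLie {X : Type*} (rels : Set (FreeLieAlgebra R X)) : Type _ :=
  FreeLieAlgebra R X ⧸ LieSubmodule.lieSpan R (FreeLieAlgebra R X) rels

namespace PresentedLie

variable {X : Type*} (rels : Set (FreeLieAlgebra R X))

noncomputable def lift (f : X → L) (hf : ∀ r ∈ rels, FreeLieAlgebra.lift R f r = 0) :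
    PresentedLie rels →ₗ⁅R⁆ L :=
  LieIdeal.quotLift _ (FreeLieAlgebra.lift R f)
    (LieSubmodule.lieSpan_le.mpr fun r hr => LieHom.mem_ker.mpr (hf r hr))

@[simp]
lemma lift_mk_of (f : X → L) (hf : ∀ r ∈ rels, FreeLieAlgebra.lift R f r = 0) (x : X) :
    lift rels f hf (LieSubmodule.Quotient.mk' _ (of R x)) = f x :=
  FreeLieAlgebra.lift_of_apply f x

lemma hom_ext {g h : PresentedLie rels →ₗ⁅R⁆ L}
    (H : ∀ x, g (LieSubmodule.Quotient.mk' _ (of R x)) = h (LieSubmodule.Quotient.mk' _ (of R x))) :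
    g = h :=
  LieIdeal.quotient_hom_ext _ (FreeLieAlgebra.hom_ext H)

lemma mk_eq_zero_of_mem {r : FreeLieAlgebra R X} (hr : r ∈ rels) :
    LieSubmodule.Quotient.mk' (LieSubmodule.lieSpan R (FreeLieAlgebra R X) rels) r = 0 :=
  (LieSubmodule.Quotient.mk_eq_zero _).mpr (LieSubmodule.subset_lieSpan hr)

end PresentedLie

end Presentation

section FreeProd

variable (M Q : Type u) [LieRing M] [LieAlgebra k M] [LieRing Q] [LieAlgebra k Q]

noncomputable def fpOf₂ (x : Q) : FreeProd k M Q :=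
  LieSubmodule.Quotient.mk' _ (fpG₂ k M Q x)

namespace FreeProd

variable {k M Q}

noncomputable def inl : M →ₗ⁅k⁆ FreeProd k M Q :=
  LieHom.ofSMulAddLie (fpOf₁ k M Q)
    (fun c x y => by
      have h := PresentedLie.mk_eq_zero_of_mem (fpRel k M Q)
        (Or.inl (Or.inl (Or.inl ⟨c, x, y, rfl⟩)))
      rwa [map_sub, map_sub, map_smul, sub_sub, sub_eq_zero] at h)
    (fun x y => sub_eq_zero.mp
      (PresentedLie.mk_eq_zero_of_mem (fpRel k M Q) (Or.inl (Or.inl (Or.inr ⟨x, y, rfl⟩)))))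

noncomputable def inr : Q →ₗ⁅k⁆ FreeProd k M Q :=
  LieHom.ofSMulAddLie (fpOf₂ k M Q)
    (fun c x y => by
      have h := PresentedLie.mk_eq_zero_of_mem (fpRel k M Q) (Or.inl (Or.inr ⟨c, x, y, rfl⟩))
      rwa [map_sub, map_sub, map_smul, sub_sub, sub_eq_zero] at h)
    (fun x y => sub_eq_zero.mp
      (PresentedLie.mk_eq_zero_of_mem (fpRel k M Q) (Or.inr ⟨x, y, rfl⟩)))

@[simp] lemma inl_apply (x : M) : (inl x : FreeProd k M Q) = fpOf₁ k M Q x := rfl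
@[simp] lemma inr_apply (x : Q) : (inr x : FreeProd k M Q) = fpOf₂ k M Q x := rfl

variable {L : Type*} [LieRing L] [LieAlgebra k L]

noncomputable def lift (f : M →ₗ⁅k⁆ L) (g : Q →ₗ⁅k⁆ L) : FreeProd k M Q →ₗ⁅k⁆ L :=
  PresentedLie.lift (fpRel k M Q) (Sum.elim f g) (by
    rintro r (((⟨c, x, y, rfl⟩ | ⟨x, y, rfl⟩) | ⟨c, x, y, rfl⟩) | ⟨x, y, rfl⟩) <;>
      simp [fpG₁, fpG₂, FreeLieAlgebra.lift_of_apply])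

@[simp]
lemma lift_of₁ (f : M →ₗ⁅k⁆ L) (g : Q →ₗ⁅k⁆ L) (x : M) : lift f g (fpOf₁ k M Q x) = f x :=
  PresentedLie.lift_mk_of _ _ _ (Sum.inl x)

@[simp]
lemma lift_of₂ (f : M →ₗ⁅k⁆ L) (g : Q →ₗ⁅k⁆ L) (x : Q) : lift f g (fpOf₂ k M Q x) = g x :=
  PresentedLie.lift_mk_of _ _ _ (Sum.inr x)

lemma hom_ext {φ χ : FreeProd k M Q →ₗ⁅k⁆ L} (h₁ : φ.comp inl = χ.comp inl)
    (h₂ : φ.comp inr = χ.comp inr) : φ = χ :=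
  PresentedLie.hom_ext _ (g := φ) (h := χ) fun
    | .inl x => LieHom.congr_fun h₁ x
    | .inr x => LieHom.congr_fun h₂ x

end FreeProd

end FreeProd

variable {k}

lemma MAb.hom_ext {L : Type*} [LieRing L] [LieAlgebra k L] {g h : MAb k →ₗ⁅k⁆ L}
    (h₀ : g (mgen k 0) = h (mgen k 0)) (h₁ : g (mgen k 1) = h (mgen k 1)) : g = h :=
  PresentedLie.hom_ext _ (g := g) (h := h) fun i => by fin_cases i <;> assumption

namespace SAlg

lemma lie_sgen_two_one : ⁅sgen k 2, sgen k 1⁆ = ⁅sgen k 3, sgen k 0⁆ := by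
  rw [← sub_eq_zero]
  exact PresentedLie.mk_eq_zero_of_mem _ (Set.mem_insert _ _)

noncomputable def lift {L : Type*} [LieRing L] [LieAlgebra k L] (f : Fin 4 → L)
    (hzb : ⁅f 2, f 1⁆ = ⁅f 3, f 0⁆) (hab : ⁅f 0, f 1⁆ = 0) : SAlg k →ₗ⁅k⁆ L :=
  PresentedLie.lift _ f (by
    rintro r (rfl | rfl) <;> simp [FreeLieAlgebra.lift_of_apply, hzb, hab])

@[simp]
lemma lift_sgen {L : Type*} [LieRing L] [LieAlgebra k L] (f : Fin 4 → L) (hzb hab) (i : Fin 4) :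
    lift f hzb hab (sgen k i) = f i :=
  PresentedLie.lift_mk_of _ f _ i

noncomputable def coord (j : Fin 4) : SAlg k →ₗ⁅k⁆ k :=
  lift (Pi.single j 1) (by simp only [lie_eq_zero_of_commRing]) (lie_eq_zero_of_commRing _ _)

@[simp]
lemma coord_sgen (j i : Fin 4) : coord j (sgen k i) = Pi.single (M := fun _ => k) j 1 i :=
  lift_sgen _ _ _ i

end SAlg

section Affine

variable (R : Type*) [CommRing R]

def mulDerivation : R →ₗ⁅R⁆ LieDerivation R R R where
  __ := LinearMap.toSpanSingleton R _
    { toLinearMap := LinearMap.id, leibniz' := by simp [lie_eq_zero_of_commRing] }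
  map_lie' := by simp [lie_eq_zero_of_commRing]

@[simp]
lemma mulDerivation_apply (c a : R) : mulDerivation R c a = c * a := rfl

/-- The Lie algebra of the affine group of the line: `⁅(0, 1), (1, 0)⁆ = (1, 0)`. -/
abbrev Aff : Type _ := R ⋊⁅mulDerivation R⁆ R

variable {R}

lemma Aff.lie_inl (v : Aff R) (c : R) :
    ⁅v, SemiDirectSum.inl _ c⁆ = SemiDirectSum.inl (mulDerivation R) (v.right * c) := by
  ext <;> simp [lie_eq_zero_of_commRing]

end Affine

/-- There is no Lie algebra `Q` with `S ≅ M * Q` by an isomorphism restricting to the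
identity on `M = ka ⊕ kb` (i.e. carrying the canonical copy of `M` in `M * Q` onto the
copy `⟨a,b⟩` of `M` in `S` generator-by-generator). -/
theorem S_not_freeProd_over_M (Q : Type u) [LieRing Q] [LieAlgebra k Q] :
    ¬ ∃ e : FreeProd k (MAb k) Q ≃ₗ⁅k⁆ SAlg k,
        (e (fpOf₁ k (MAb k) Q (mgen k 0)) = sgen k 0) ∧
        (e (fpOf₁ k (MAb k) Q (mgen k 1)) = sgen k 1) := by
  rintro ⟨e, ha, hb⟩
  let ψ (j : Fin 4) : FreeProd k (MAb k) Q →ₗ⁅k⁆ k := (SAlg.coord j).comp e.toLieHom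
  have hψM : (ψ 2).comp FreeProd.inl = 0 :=
    MAb.hom_ext (by simp [ψ, ha]) (by simp [ψ, hb])
  let Φ : FreeProd k (MAb k) Q →ₗ⁅k⁆ Aff k :=
    FreeProd.lift ((SemiDirectSum.inl _).comp ((ψ 1).comp FreeProd.inl))
      ((SemiDirectSum.inr _).comp ((ψ 2).comp FreeProd.inr))
  have hΦ : (SemiDirectSum.projr _).comp Φ = ψ 2 := by
    refine FreeProd.hom_ext ?_ ?_
    · rw [hψM]; ext x; simp [Φ]
    · ext x; simp [Φ]
  have hΦa : Φ (fpOf₁ k (MAb k) Q (mgen k 0)) = 0 := by simp [Φ, ψ, ha]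
  have hΦb : Φ (fpOf₁ k (MAb k) Q (mgen k 1)) = SemiDirectSum.inl _ 1 := by simp [Φ, ψ, hb]
  have hΦz : (Φ (e.symm (sgen k 2))).right = 1 := by
    simpa [ψ] using LieHom.congr_fun hΦ (e.symm (sgen k 2))
  have hrel : ⁅e.symm (sgen k 2), fpOf₁ k (MAb k) Q (mgen k 1)⁆
      = ⁅e.symm (sgen k 3), fpOf₁ k (MAb k) Q (mgen k 0)⁆ :=
    e.injective (by simpa [ha, hb] using SAlg.lie_sgen_two_one)
  have h := congrArg Φ hrel
  rw [LieHom.map_lie, LieHom.map_lie, hΦa, hΦb, lie_zero, Aff.lie_inl, hΦz] at h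
  simp at h
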